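/- arXiv:1801.05183 — 5 statements merged into one kernel-verified Lean document; each statement's English description precedes it below -/
import Mathlib

section
/- Let ħ be a nonzero real constant and S : ℝⁿ → ℝ smooth. Then ΔS(x) = 0 for all x ∈ ℝⁿ if and only if the first-order operator φ ↦ −iħ·⟨∇S, ∇φ⟩ is formally self-adjoint with respect to Lebesgue measure, i.e. for all compactly supported smooth φ, ψ : ℝⁿ → ℂ one has ∫ (−iħ·⟨∇S(x), ∇φ(x)⟩)·conj(ψ(x)) dx = ∫ φ(x)·conj(−iħ·⟨∇S(x), ∇ψ(x)⟩) dx, where ⟨∇S, ∇φ⟩ denotes the directional derivative of φ along the (real) gradient vector ∇S. -/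
open MeasureTheory

/-- The EuclidLaplacian of a function on Euclidean space:
`Δf(x) = Σⱼ ∂²f/∂xⱼ²(x)`. -/
noncomputable def EuclidLaplacian {n : ℕ} {W : Type*} [NormedAddCommGroup W] [NormedSpace ℝ W]
    (f : EuclideanSpace ℝ (Fin n) → W) (x : EuclideanSpace ℝ (Fin n)) : W :=
  ∑ j : Fin n, iteratedFDeriv ℝ 2 f x ![EuclideanSpace.single j 1, EuclideanSpace.single j 1]

lemma euclid_decomp {n : ℕ} (v : EuclideanSpace ℝ (Fin n)) :
    v = ∑ j, v j • EuclideanSpace.single j (1 : ℝ) := by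
  ext i
  rw [WithLp.ofLp_sum, Finset.sum_apply]
  simp [EuclideanSpace.single_apply]

lemma grad_coord {n : ℕ} (S : EuclideanSpace ℝ (Fin n) → ℝ) (x : EuclideanSpace ℝ (Fin n))
    (j : Fin n) : gradient S x j = fderiv ℝ S x (EuclideanSpace.single j 1) := by
  have h : inner ℝ (gradient S x) (EuclideanSpace.single j (1 : ℝ))
      = fderiv ℝ S x (EuclideanSpace.single j 1) :=
    InnerProductSpace.toDual_symm_apply
  rw [← h, EuclideanSpace.inner_single_right]
  simp

lemma partial_smooth {n : ℕ} {S : EuclideanSpace ℝ (Fin n) → ℝ}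
    (hS : ContDiff ℝ (⊤ : ℕ∞) S) (v : EuclideanSpace ℝ (Fin n)) :
    ContDiff ℝ (⊤ : ℕ∞) (fun y => fderiv ℝ S y v) :=
  (ContinuousLinearMap.apply ℝ ℝ v).contDiff.comp (hS.fderiv_right (m := (⊤:ℕ∞)) (le_of_eq ENat.coe_top_add_one))

lemma second_eq {n : ℕ} {S : EuclideanSpace ℝ (Fin n) → ℝ}
    (hS : ContDiff ℝ (⊤ : ℕ∞) S) (x : EuclideanSpace ℝ (Fin n)) (j : Fin n) :
    fderiv ℝ (fun y => fderiv ℝ S y (EuclideanSpace.single j 1)) x (EuclideanSpace.single j 1)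
      = iteratedFDeriv ℝ 2 S x ![EuclideanSpace.single j 1, EuclideanSpace.single j 1] := by
  rw [iteratedFDeriv_two_apply]
  have hd : DifferentiableAt ℝ (fderiv ℝ S) x :=
    (hS.fderiv_right (m := (⊤:ℕ∞)) (le_of_eq ENat.coe_top_add_one)).differentiable (by simp) x
  rw [fderiv_clm_apply hd (differentiableAt_const _)]
  simp

lemma lap_cont {n : ℕ} {S : EuclideanSpace ℝ (Fin n) → ℝ}
    (hS : ContDiff ℝ (⊤ : ℕ∞) S) : Continuous (EuclidLaplacian S) := by
  have h : EuclidLaplacian S = fun x => ∑ j,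
      fderiv ℝ (fun y => fderiv ℝ S y (EuclideanSpace.single j 1)) x
        (EuclideanSpace.single j 1) := by
    funext x
    exact (Finset.sum_congr rfl fun j _ => (second_eq hS x j).symm)
  rw [h]
  exact continuous_finset_sum _ fun j _ =>
    (partial_smooth (partial_smooth hS _) _).continuous

lemma ibp {n : ℕ} {S : EuclideanSpace ℝ (Fin n) → ℝ} (hS : ContDiff ℝ (⊤ : ℕ∞) S)
    (g : EuclideanSpace ℝ (Fin n) → ℂ) (hg : ContDiff ℝ (⊤ : ℕ∞) g)
    (hgc : HasCompactSupport g) :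
    ∫ x, fderiv ℝ g x (gradient S x) = - ∫ x, (EuclidLaplacian S x) • g x := by
  set e : Fin n → EuclideanSpace ℝ (Fin n) := fun j => EuclideanSpace.single j (1 : ℝ) with he
  have hgd : Differentiable ℝ g := hg.differentiable (by simp)
  have hDgc : ∀ j, Continuous (fun x => fderiv ℝ g x (e j)) :=
    fun j => ((hg.fderiv_right (m := (⊤:ℕ∞)) (le_of_eq ENat.coe_top_add_one)).continuous).clm_apply continuous_const
  have hDgsupp : ∀ j, HasCompactSupport (fun x => fderiv ℝ g x (e j)) :=
    fun j => (hgc.fderiv (𝕜 := ℝ)).comp_left (g := fun L : _ →L[ℝ] ℂ => L (e j)) rfl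
  have hint1 : ∀ j : Fin n,
      Integrable (fun x => (fderiv ℝ S x (e j)) • fderiv ℝ g x (e j)) volume := by
    intro j
    exact (((partial_smooth hS (e j)).continuous).smul (hDgc j)).integrable_of_hasCompactSupport
      ((hDgsupp j).smul_left)
  have hint2 : ∀ j : Fin n,
      Integrable (fun x =>
        (fderiv ℝ (fun y => fderiv ℝ S y (e j)) x (e j)) • g x) volume := by
    intro j
    exact (((partial_smooth (partial_smooth hS (e j)) (e j)).continuous).smul
      hg.continuous).integrable_of_hasCompactSupport (hgc.smul_left)
  have hint3 : ∀ j : Fin n,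
      Integrable (fun x => (fderiv ℝ S x (e j)) • g x) volume := by
    intro j
    exact (((partial_smooth hS (e j)).continuous).smul
      hg.continuous).integrable_of_hasCompactSupport (hgc.smul_left)
  have h1 : ∀ x, fderiv ℝ g x (gradient S x)
      = ∑ j, (fderiv ℝ S x (e j)) • fderiv ℝ g x (e j) := by
    intro x
    conv_lhs => rw [euclid_decomp (gradient S x)]
    rw [map_sum]
    exact Finset.sum_congr rfl fun j _ => by
      rw [(fderiv ℝ g x).map_smul, grad_coord]
  calc ∫ x, fderiv ℝ g x (gradient S x)
      = ∫ x, ∑ j, (fderiv ℝ S x (e j)) • fderiv ℝ g x (e j) := by simp_rw [h1]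
    _ = ∑ j, ∫ x, (fderiv ℝ S x (e j)) • fderiv ℝ g x (e j) :=
        integral_finset_sum _ (fun j _ => hint1 j)
    _ = ∑ j, -∫ x, (fderiv ℝ (fun y => fderiv ℝ S y (e j)) x (e j)) • g x := by
        refine Finset.sum_congr rfl fun j _ => ?_
        exact integral_smul_fderiv_eq_neg_fderiv_smul_of_integrable (hint2 j) (hint1 j)
          (hint3 j) (fun x _ => (partial_smooth hS (e j)).differentiable (by simp) x) (fun x _ => hgd x)
    _ = -∑ j, ∫ x, (fderiv ℝ (fun y => fderiv ℝ S y (e j)) x (e j)) • g x := by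
        rw [Finset.sum_neg_distrib]
    _ = -∫ x, ∑ j, (fderiv ℝ (fun y => fderiv ℝ S y (e j)) x (e j)) • g x := by
        rw [integral_finset_sum _ (fun j _ => hint2 j)]
    _ = - ∫ x, (EuclidLaplacian S x) • g x := by
        congr 1
        refine integral_congr_ae (Filter.Eventually.of_forall fun x => ?_)
        simp only [EuclidLaplacian]
        rw [← Finset.sum_smul]
        congr 1
        exact Finset.sum_congr rfl fun j _ => second_eq hS x j

lemma prod_rule {n : ℕ} {φ ψ : EuclideanSpace ℝ (Fin n) → ℂ}
    (hφ : ContDiff ℝ (⊤ : ℕ∞) φ) (hψ : ContDiff ℝ (⊤ : ℕ∞) ψ)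
    (x v : EuclideanSpace ℝ (Fin n)) :
    fderiv ℝ (fun y => φ y * (starRingEnd ℂ) (ψ y)) x v
      = fderiv ℝ φ x v * (starRingEnd ℂ) (ψ x)
        + φ x * (starRingEnd ℂ) (fderiv ℝ ψ x v) := by
  have hψd : Differentiable ℝ ψ := hψ.differentiable (by simp)
  have hconj : fderiv ℝ (fun y => (starRingEnd ℂ) (ψ y)) x
      = (Complex.conjCLE : ℂ →L[ℝ] ℂ).comp (fderiv ℝ ψ x) := by
    have := Complex.conjCLE.comp_fderiv (f := ψ) (x := x)
    exact this
  have hcd : DifferentiableAt ℝ (fun y => (starRingEnd ℂ) (ψ y)) x :=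
    (Complex.conjCLE.differentiable.comp hψd) x
  rw [fderiv_fun_mul (hφ.differentiable (by simp) x) hcd]
  simp only [ContinuousLinearMap.add_apply, ContinuousLinearMap.smul_apply, hconj,
    ContinuousLinearMap.coe_comp', Function.comp_apply, smul_eq_mul]
  have : (Complex.conjCLE : ℂ →L[ℝ] ℂ) (fderiv ℝ ψ x v) = (starRingEnd ℂ) (fderiv ℝ ψ x v) := rfl
  rw [this]
  ring

/-- `S` is harmonic iff the first-order operator `φ ↦ −iħ·⟨∇S, ∇φ⟩` is formally
self-adjoint with respect to Lebesgue measure on compactly supported smooth functions. -/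
theorem statement4 (n : ℕ) (hbar : ℝ) (hhbar : hbar ≠ 0)
    (S : EuclideanSpace ℝ (Fin n) → ℝ) (hS : ContDiff ℝ (⊤ : ℕ∞) S) :
    (∀ x, EuclidLaplacian S x = 0) ↔
      (∀ φ ψ : EuclideanSpace ℝ (Fin n) → ℂ,
        ContDiff ℝ (⊤ : ℕ∞) φ → HasCompactSupport φ →
        ContDiff ℝ (⊤ : ℕ∞) ψ → HasCompactSupport ψ →
        ∫ x, (-(Complex.I * (hbar : ℂ)) * fderiv ℝ φ x (gradient S x)) * (starRingEnd ℂ) (ψ x)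
          = ∫ x, φ x * (starRingEnd ℂ) (-(Complex.I * (hbar : ℂ)) * fderiv ℝ ψ x (gradient S x))) := by
  have hgradc : Continuous (gradient S) := by
    have : gradient S = fun x =>
        (InnerProductSpace.toDual ℝ (EuclideanSpace ℝ (Fin n))).symm (fderiv ℝ S x) := rfl
    rw [this]
    exact (InnerProductSpace.toDual ℝ _).symm.continuous.comp (hS.fderiv_right (m := (⊤:ℕ∞)) (le_of_eq ENat.coe_top_add_one)).continuous
  have hI : (-(Complex.I * (hbar : ℂ))) ≠ 0 :=
    neg_ne_zero.mpr (mul_ne_zero Complex.I_ne_zero (by exact_mod_cast hhbar))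
  have key : ∀ φ ψ : EuclideanSpace ℝ (Fin n) → ℂ,
      ContDiff ℝ (⊤ : ℕ∞) φ → HasCompactSupport φ →
      ContDiff ℝ (⊤ : ℕ∞) ψ → HasCompactSupport ψ →
      ((∫ x, (-(Complex.I * (hbar : ℂ)) * fderiv ℝ φ x (gradient S x)) * (starRingEnd ℂ) (ψ x)
          = ∫ x, φ x * (starRingEnd ℂ)
              (-(Complex.I * (hbar : ℂ)) * fderiv ℝ ψ x (gradient S x)))
        ↔ (∫ x, (EuclidLaplacian S x) • (φ x * (starRingEnd ℂ) (ψ x)) = 0)) := by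
    intro φ ψ hφ hφc hψ hψc
    set g : EuclideanSpace ℝ (Fin n) → ℂ := fun x => φ x * (starRingEnd ℂ) (ψ x) with hg
    have hgsm : ContDiff ℝ (⊤ : ℕ∞) g :=
      hφ.mul ((Complex.conjCLE.contDiff).comp hψ)
    have hgc : HasCompactSupport g := hφc.mul_right
    have hibp := ibp hS g hgsm hgc
    set c : ℂ := -(Complex.I * (hbar : ℂ)) with hc
    have hDφc : Continuous fun x => fderiv ℝ φ x (gradient S x) :=
      ((hφ.fderiv_right (m := (⊤:ℕ∞)) (le_of_eq ENat.coe_top_add_one)).continuous).clm_apply hgradc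
    have hDψc : Continuous fun x => fderiv ℝ ψ x (gradient S x) :=
      ((hψ.fderiv_right (m := (⊤:ℕ∞)) (le_of_eq ENat.coe_top_add_one)).continuous).clm_apply hgradc
    have hXint : Integrable
        (fun x => fderiv ℝ φ x (gradient S x) * (starRingEnd ℂ) (ψ x)) volume := by
      refine (hDφc.mul (Complex.continuous_conj.comp hψ.continuous)).integrable_of_hasCompactSupport ?_
      exact (hψc.comp_left (g := starRingEnd ℂ) (map_zero _)).mul_left
    have hYint : Integrable
        (fun x => φ x * (starRingEnd ℂ) (fderiv ℝ ψ x (gradient S x))) volume := by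
      refine (hφ.continuous.mul (Complex.continuous_conj.comp hDψc)).integrable_of_hasCompactSupport ?_
      exact hφc.mul_right
    have hA : (∫ x, (c * fderiv ℝ φ x (gradient S x)) * (starRingEnd ℂ) (ψ x))
        = c * ∫ x, fderiv ℝ φ x (gradient S x) * (starRingEnd ℂ) (ψ x) := by
      simp_rw [mul_assoc]
      exact integral_const_mul c _
    have hB : (∫ x, φ x * (starRingEnd ℂ) (c * fderiv ℝ ψ x (gradient S x)))
        = c * (- ∫ x, φ x * (starRingEnd ℂ) (fderiv ℝ ψ x (gradient S x))) := by
      have hcc : (starRingEnd ℂ) c = -c := by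
        rw [hc]
        simp [Complex.conj_ofReal]
      rw [← integral_neg, ← integral_const_mul]
      refine integral_congr_ae (Filter.Eventually.of_forall fun x => ?_)
      simp only [map_mul, hcc]
      ring
    have hXY : (∫ x, fderiv ℝ φ x (gradient S x) * (starRingEnd ℂ) (ψ x))
        + (∫ x, φ x * (starRingEnd ℂ) (fderiv ℝ ψ x (gradient S x)))
        = - ∫ x, (EuclidLaplacian S x) • g x := by
      rw [← integral_add hXint hYint, ← hibp]
      refine integral_congr_ae (Filter.Eventually.of_forall fun x => ?_)
      exact (prod_rule hφ hψ x (gradient S x)).symm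
    rw [hA, hB, mul_right_inj' hI, eq_neg_iff_add_eq_zero, hXY, neg_eq_zero]
  constructor
  · intro hΔ φ ψ hφ hφc hψ hψc
    rw [key φ ψ hφ hφc hψ hψc]
    simp only [hΔ, zero_smul, integral_zero]
  · intro h x₀
    by_contra hne
    set c : ℝ := EuclidLaplacian S x₀ with hcdef
    have hU : IsOpen {x | 0 < c * EuclidLaplacian S x} :=
      isOpen_lt continuous_const (continuous_const.mul (lap_cont hS))
    have hx₀ : x₀ ∈ {x | 0 < c * EuclidLaplacian S x} := by
      simpa [← hcdef] using mul_self_pos.mpr hne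
    obtain ⟨ε, hε, hball⟩ := Metric.isOpen_iff.mp hU x₀ hx₀
    set b : ContDiffBump x₀ := ⟨ε/2, ε, by positivity, by linarith⟩ with hbdef
    set φ : EuclideanSpace ℝ (Fin n) → ℂ := fun x => ((b x : ℝ) : ℂ) with hφdef
    have hφ : ContDiff ℝ (⊤ : ℕ∞) φ := Complex.ofRealCLM.contDiff.comp b.contDiff
    have hφc : HasCompactSupport φ :=
      b.hasCompactSupport.comp_left (g := fun r : ℝ => (r : ℂ)) (by simp)
    have h0 := (key φ φ hφ hφc hφ hφc).mp (h φ φ hφ hφc hφ hφc)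
    have h1 : ∫ x, ((EuclidLaplacian S x * (b x * b x) : ℝ) : ℂ) = 0 := by
      rw [← h0]
      refine integral_congr_ae (Filter.Eventually.of_forall fun x => ?_)
      simp only [hφdef, Complex.conj_ofReal, Complex.real_smul]
      push_cast
      ring
    have hintreal : Integrable (fun x => EuclidLaplacian S x * (b x * b x)) volume :=
      ((lap_cont hS).mul (b.continuous.mul b.continuous)).integrable_of_hasCompactSupport
        (HasCompactSupport.mul_left (b.hasCompactSupport.mul_left (f := ⇑b)))
    have h2 : ∫ x, EuclidLaplacian S x * (b x * b x) = 0 := by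
      have hcomm := Complex.ofRealCLM.integral_comp_comm hintreal
      simp only [Complex.ofRealCLM_apply] at hcomm
      have h3 : ((∫ x, EuclidLaplacian S x * (b x * b x) : ℝ) : ℂ) = 0 := by
        rw [← hcomm]
        exact h1
      exact_mod_cast h3
    set F : EuclideanSpace ℝ (Fin n) → ℝ := fun x => (c * EuclidLaplacian S x) * (b x * b x)
      with hFdef
    have hFc : Continuous F :=
      (continuous_const.mul (lap_cont hS)).mul (b.continuous.mul b.continuous)
    have hFsupp : HasCompactSupport F :=
      HasCompactSupport.mul_left (b.hasCompactSupport.mul_left (f := ⇑b))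
    have hFint : Integrable F volume := hFc.integrable_of_hasCompactSupport hFsupp
    have hF0 : ∀ x, 0 ≤ F x := by
      intro x
      by_cases hx : x ∈ Metric.ball x₀ ε
      · exact mul_nonneg (le_of_lt (hball hx)) (mul_self_nonneg _)
      · have hbx : b x = 0 := by
          rw [← Function.notMem_support, b.support_eq]
          exact hx
        simp [hFdef, hbx]
    have hpos : 0 < F x₀ := by
      have hb1 : b x₀ = 1 := b.one_of_mem_closedBall (Metric.mem_closedBall_self (by positivity))
      have hcc : (0:ℝ) < c * c := mul_self_pos.mpr hne
      simp only [hFdef, hb1, mul_one, ← hcdef]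
      exact hcc
    have hFeq0 : ∫ x, F x = 0 := by
      have heq : ∀ x, F x = c * (EuclidLaplacian S x * (b x * b x)) := fun x => by
        simp only [hFdef]; ring
      simp_rw [heq]
      rw [integral_const_mul, h2, mul_zero]
    have hop : IsOpen {x | 0 < F x} := isOpen_lt continuous_const hFc
    have hμ : 0 < volume (Function.support F) :=
      lt_of_lt_of_le (hop.measure_pos volume ⟨x₀, hpos⟩)
        (measure_mono fun x hx => ne_of_gt hx)
    have hcontra := (integral_pos_iff_support_of_nonneg (fun x => hF0 x) hFint).mpr hμ
    rw [hFeq0] at hcontra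
    exact lt_irrefl 0 hcontra
end

section
/- Let S, U : ℝⁿ → ℝ be smooth functions. Suppose that ∇S is an intermediate integral of the equations of motion, i.e. for every solution x : I → ℝⁿ (I an open interval) of x'(t) = ∇S(x(t)) and every t ∈ I, the curve p(t) := ∇S(x(t)) satisfies p'(t) = −∇U(x(t)). Then the function x ↦ ½‖∇S(x)‖² + U(x) is constant on ℝⁿ, i.e. S satisfies the Hamilton–Jacobi equation ½‖∇S‖² + U = E for some constant E ∈ ℝ. -/
open InnerProductSpace Set

/-- If `∇S` is an intermediate integral of the equations of motion (every solution of
`x' = ∇S(x)` on an open interval satisfies `p' = −∇U(x)` for `p := ∇S ∘ x`), then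
`½‖∇S‖² + U` is constant, i.e. `S` satisfies the Hamilton–Jacobi equation for some `E`. -/
theorem statement7 (n : ℕ)
    (S U : EuclideanSpace ℝ (Fin n) → ℝ)
    (hS : ContDiff ℝ (⊤ : ℕ∞) S) (hU : ContDiff ℝ (⊤ : ℕ∞) U)
    (hint : ∀ (a b : ℝ) (x : ℝ → EuclideanSpace ℝ (Fin n)),
      (∀ t ∈ Set.Ioo a b, HasDerivAt x (gradient S (x t)) t) →
      ∀ t ∈ Set.Ioo a b,
        HasDerivAt (fun u => gradient S (x u)) (-(gradient U (x t))) t) :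
    ∃ E : ℝ, ∀ q, (1/2 : ℝ) * ‖gradient S q‖^2 + U q = E := by
  let E := EuclideanSpace ℝ (Fin n)
  set g : E → E := gradient S with hgdef
  -- a genuine ℝ-linear continuous version of `(toDual ℝ E).symm`
  let ψ : StrongDual ℝ E →L[ℝ] E :=
    LinearMap.toContinuousLinearMap
      { toFun := fun ℓ => (toDual ℝ E).symm ℓ
        map_add' := fun a b => by simp
        map_smul' := fun r a => by
          simp [LinearIsometryEquiv.map_smulₛₗ, starRingEnd_apply] }
  have hψ : ∀ ℓ w, ⟪ψ ℓ, w⟫_ℝ = ℓ w := fun ℓ w => toDual_symm_apply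
  have hgS : g = fun x => ψ (fderiv ℝ S x) := rfl
  have htop : ((⊤ : ℕ∞) : WithTop ℕ∞) + 1 ≤ ((⊤ : ℕ∞) : WithTop ℕ∞) := by
    norm_cast
  have hone : (1 : WithTop ℕ∞) ≤ ((⊤ : ℕ∞) : WithTop ℕ∞) := by
    exact_mod_cast (le_top : (1:ℕ∞) ≤ ⊤)
  have hfd : ContDiff ℝ (⊤ : ℕ∞) (fderiv ℝ S) := hS.fderiv_right htop
  have hg : ContDiff ℝ (⊤ : ℕ∞) g := by
    rw [hgS]; exact ψ.contDiff.comp hfd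
  have hgq : ∀ q : E, HasFDerivAt g (fderiv ℝ g q) q :=
    fun q => (hg.differentiable (zero_lt_one.trans_le hone).ne' q).hasFDerivAt
  -- key pointwise identity from the intermediate-integral hypothesis
  have key : ∀ q : E, (fderiv ℝ g q) (g q) = -(gradient U q) := by
    intro q
    obtain ⟨x, hx0, ε, hε, hx⟩ :=
      ContDiffAt.exists_forall_mem_closedBall_exists_eq_forall_mem_Ioo_hasDerivAt₀ ((hg.of_le hone).contDiffAt (x := q)) (0 : ℝ)
    have h0 : (0 : ℝ) ∈ Ioo (0 - ε) (0 + ε) := by constructor <;> simp [hε]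
    have h1 : HasDerivAt (fun u => g (x u)) (-(gradient U (x 0))) 0 :=
      hint (0 - ε) (0 + ε) x hx 0 h0
    have h2 : HasDerivAt (fun u => g (x u)) ((fderiv ℝ g (x 0)) (g (x 0))) 0 :=
      (hgq (x 0)).comp_hasDerivAt 0 (hx 0 h0)
    rw [hx0] at h1 h2
    exact h2.unique h1
  -- symmetry of the Hessian, expressed via `g`
  have symm : ∀ q v w : E, ⟪(fderiv ℝ g q) v, w⟫_ℝ = ⟪(fderiv ℝ g q) w, v⟫_ℝ := by
    intro q v w
    have hB : ∀ u z : E,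
        ⟪(fderiv ℝ g q) u, z⟫_ℝ = (fderiv ℝ (fderiv ℝ S) q u) z := by
      intro u z
      have h3 : HasFDerivAt (fderiv ℝ S) (fderiv ℝ (fderiv ℝ S) q) q :=
        (hfd.differentiable (zero_lt_one.trans_le hone).ne' q).hasFDerivAt
      have h4 : HasFDerivAt g ((ψ).comp (fderiv ℝ (fderiv ℝ S) q)) q := by
        rw [hgS]; exact ψ.hasFDerivAt.comp q h3
      have h5 : fderiv ℝ g q = (ψ).comp (fderiv ℝ (fderiv ℝ S) q) := h4.fderiv
      rw [h5]
      exact hψ _ _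
    have hsym := second_derivative_symmetric (f := S) (f' := fderiv ℝ S)
      (f'' := fderiv ℝ (fderiv ℝ S) q)
      (fun y => (hS.differentiable (zero_lt_one.trans_le hone).ne' y).hasFDerivAt)
      ((hfd.differentiable (zero_lt_one.trans_le hone).ne' q).hasFDerivAt) v w
    rw [hB v w, hB w v]; exact hsym
  -- the conserved energy
  set F : E → ℝ := fun q => (1/2 : ℝ) * ⟪g q, g q⟫_ℝ + U q with hF
  have hUq : ∀ q : E, HasFDerivAt U (toDual ℝ E (gradient U q)) q := by
    intro q
    have := (hU.differentiable (zero_lt_one.trans_le hone).ne' q).hasFDerivAt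
    rwa [show toDual ℝ E (gradient U q) = fderiv ℝ U q from
      (toDual ℝ E).apply_symm_apply _]
  have hF0 : ∀ q : E, HasFDerivAt F (0 : E →L[ℝ] ℝ) q := by
    intro q
    have hin : HasFDerivAt (fun t => ⟪g t, g t⟫_ℝ)
        ((fderivInnerCLM ℝ (g q, g q)).comp ((fderiv ℝ g q).prod (fderiv ℝ g q))) q :=
      (hgq q).inner ℝ (hgq q)
    have hsum := (hin.const_mul (1/2 : ℝ)).add (hUq q)
    refine hsum.congr_fderiv ?_
    ext v
    simp only [ContinuousLinearMap.zero_apply, ContinuousLinearMap.add_apply,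
      ContinuousLinearMap.smul_apply, ContinuousLinearMap.comp_apply,
      ContinuousLinearMap.prod_apply, fderivInnerCLM_apply, toDual_apply_apply, smul_eq_mul]
    have h1 : ⟪(fderiv ℝ g q) v, g q⟫_ℝ = ⟪(fderiv ℝ g q) (g q), v⟫_ℝ := symm q v (g q)
    rw [key q, inner_neg_left] at h1
    have h2 : ⟪g q, (fderiv ℝ g q) v⟫_ℝ = ⟪(fderiv ℝ g q) v, g q⟫_ℝ := real_inner_comm _ _
    have h3 : ⟪gradient U q, v⟫_ℝ = ⟪v, gradient U q⟫_ℝ := real_inner_comm _ _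
    rw [h2, h1, h3]
    ring
  have hconst : ∀ q : E, F q = F 0 :=
    fun q => is_const_of_fderiv_eq_zero (fun y => (hF0 y).differentiableAt)
      (fun y => (hF0 y).fderiv) q 0
  refine ⟨F 0, fun q => ?_⟩
  rw [← hconst q]
  show _ = (1/2 : ℝ) * ⟪g q, g q⟫_ℝ + U q
  rw [real_inner_self_eq_norm_sq]
end

section
/- Let Γ be a smooth map from ℝⁿ to the space of symmetric bilinear maps ℝⁿ × ℝⁿ → ℝⁿ, let x₀ ∈ ℝⁿ, let V be an open neighborhood of 0 in ℝⁿ, and let γ : V × [0,1] → ℝⁿ be smooth such that for each v ∈ V: γ(v,0) = x₀, ∂ₛγ(v,0) = v, and ∂ₛ²γ(v,s) = −Γ(γ(v,s))(∂ₛγ(v,s), ∂ₛγ(v,s)) for all s ∈ [0,1]. Define the exponential map exp : V → ℝⁿ by exp(v) := γ(v,1). Then for every smooth f : ℝⁿ → ℝ, the second Fréchet derivative of f ∘ exp at 0 is given by D²(f∘exp)(0)(u,w) = D²f(x₀)(u,w) − Df(x₀)(Γ(x₀)(u,w)) for all u, w ∈ ℝⁿ; i.e. it equals the second covariant differential of f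 at x₀ with respect to the symmetric connection with Christoffel symbols Γ. -/
/-!
By uniqueness of solutions of the geodesic equation, geodesics rescale: `γ(tv, s) = γ(v, ts)`.
Hence `exp (t • v) = γ(v, t)`, so along the ray through `v` the function `f ∘ exp` is `f` along
the geodesic with initial velocity `v`, and differentiating twice at `t = 0` gives
`D²(f ∘ exp)(0)(v, v) = D²f(x₀)(v, v) + Df(x₀)(γ''(0)) = D²f(x₀)(v, v) − Df(x₀)(Γ(x₀)(v, v))`
for all small `v`. Both sides are symmetric bilinear forms (for the right-hand side this is the
symmetry of `Γ`), so polarization gives the identity for all `u, w`.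
-/

open Set Filter Topology

variable {E G : Type*} [NormedAddCommGroup E] [NormedSpace ℝ E]
  [NormedAddCommGroup G] [NormedSpace ℝ G]

theorem IsIntegralCurveOn.eqOn_Icc_of_locallyLipschitz {X : E → E} (hX : LocallyLipschitz X)
    {f g : ℝ → E} {a b : ℝ} (hf : IsIntegralCurveOn f (fun _ ↦ X) (Icc a b))
    (hg : IsIntegralCurveOn g (fun _ ↦ X) (Icc a b)) (ha : f a = g a) :
    EqOn f g (Icc a b) := by
  set K := f '' Icc a b ∪ g '' Icc a b
  have hK : IsCompact K :=
    (isCompact_Icc.image_of_continuousOn hf.continuousOn).union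
      (isCompact_Icc.image_of_continuousOn hg.continuousOn)
  obtain ⟨L, hL⟩ := hX.locallyLipschitzOn.exists_lipschitzOnWith_of_compact hK
  have hnhds {t : ℝ} (ht : t ∈ Ico a b) : Icc a b ∈ 𝓝[≥] t :=
    mem_of_superset (Icc_mem_nhdsGE ht.2) (Icc_subset_Icc_left ht.1)
  exact ODE_solution_unique_of_mem_Icc_right (s := fun _ ↦ K) (fun _ _ ↦ hL) hf.continuousOn
    (fun t ht ↦ (hf t (Ico_subset_Icc_self ht)).mono_of_mem_nhdsWithin (hnhds ht))
    (fun t ht ↦ .inl ⟨t, Ico_subset_Icc_self ht, rfl⟩) hg.continuousOn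
    (fun t ht ↦ (hg t (Ico_subset_Icc_self ht)).mono_of_mem_nhdsWithin (hnhds ht))
    (fun t ht ↦ .inr ⟨t, Ico_subset_Icc_self ht, rfl⟩) ha

noncomputable def geodesicField (Γ : E → E →L[ℝ] E →L[ℝ] E) (p : E × E) : E × E :=
  (p.2, -Γ p.1 p.2 p.2)

theorem locallyLipschitz_geodesicField {Γ : E → E →L[ℝ] E →L[ℝ] E} (hΓ : ContDiff ℝ 1 Γ) :
    LocallyLipschitz (geodesicField Γ) :=
  ContDiff.locallyLipschitz <| contDiff_snd.prodMk
    (((hΓ.comp contDiff_fst).clm_apply contDiff_snd).clm_apply contDiff_snd).neg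

theorem IsIntegralCurveOn.geodesicField_rescale {Γ : E → E →L[ℝ] E →L[ℝ] E} {c dc : ℝ → E}
    (h : IsIntegralCurveOn (fun s ↦ (c s, dc s)) (fun _ ↦ geodesicField Γ) (Icc 0 1))
    {t : ℝ} (ht : t ∈ Icc (0 : ℝ) 1) :
    IsIntegralCurveOn (fun s ↦ (c (t * s), t • dc (t * s))) (fun _ ↦ geodesicField Γ)
      (Icc 0 1) := by
  intro s hs
  have hmul : HasDerivWithinAt (t * ·) t (Icc 0 1) s := by
    simpa using ((hasDerivAt_id s).const_mul t).hasDerivWithinAt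
  have hmaps : MapsTo (t * ·) (Icc (0 : ℝ) 1) (Icc 0 1) := fun s hs ↦
    ⟨mul_nonneg ht.1 hs.1, mul_le_one₀ ht.2 hs.1 hs.2⟩
  have hL := ((ContinuousLinearMap.id ℝ E).prodMap (t • ContinuousLinearMap.id ℝ E)).hasFDerivAt
    |>.comp_hasDerivWithinAt s ((h _ (hmaps hs)).scomp s hmul hmaps)
  convert hL using 1
  · ext s <;> simp
  · simp [geodesicField, smul_smul]

theorem IsIntegralCurveOn.geodesicField_eqOn_rescale {Γ : E → E →L[ℝ] E →L[ℝ] E}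
    (hΓ : ContDiff ℝ 1 Γ) {c dc c' dc' : ℝ → E}
    (h : IsIntegralCurveOn (fun s ↦ (c s, dc s)) (fun _ ↦ geodesicField Γ) (Icc 0 1))
    (h' : IsIntegralCurveOn (fun s ↦ (c' s, dc' s)) (fun _ ↦ geodesicField Γ) (Icc 0 1))
    {t : ℝ} (ht : t ∈ Icc (0 : ℝ) 1) (h0 : c' 0 = c 0) (hd0 : dc' 0 = t • dc 0) :
    ∀ s ∈ Icc (0 : ℝ) 1, c' s = c (t * s) := fun _ hs ↦
  congrArg Prod.fst <| eqOn_Icc_of_locallyLipschitz (locallyLipschitz_geodesicField hΓ) h'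
    (h.geodesicField_rescale ht) (by simp [h0, hd0]) hs

theorem geodesicField_family_apply_smul {Γ : E → E →L[ℝ] E →L[ℝ] E} (hΓ : ContDiff ℝ 1 Γ)
    {V : Set E} {x₀ : E} {γ dγ : E → ℝ → E} (hinit : ∀ v ∈ V, γ v 0 = x₀)
    (hvel : ∀ v ∈ V, dγ v 0 = v)
    (hcurve : ∀ v ∈ V,
      IsIntegralCurveOn (fun s ↦ (γ v s, dγ v s)) (fun _ ↦ geodesicField Γ) (Icc 0 1))
    {v : E} {t : ℝ} (hv : v ∈ V) (ht : t ∈ Icc (0 : ℝ) 1) (htv : t • v ∈ V) :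
    γ (t • v) 1 = γ v t := by
  simpa using (hcurve v hv).geodesicField_eqOn_rescale hΓ (hcurve _ htv) ht
    (by rw [hinit _ htv, hinit _ hv]) (by rw [hvel _ htv, hvel _ hv]) 1
    (right_mem_Icc.2 zero_le_one)

theorem hasDerivAt_fderiv_smul_apply {F : E → G} (hF : DifferentiableAt ℝ (fderiv ℝ F) 0)
    (v : E) : HasDerivAt (fun t : ℝ ↦ fderiv ℝ F (t • v) v) (fderiv ℝ (fderiv ℝ F) 0 v v) 0 := by
  have hray : HasDerivAt (fun t : ℝ ↦ t • v) v 0 := by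
    simpa using (hasDerivAt_id (0 : ℝ)).smul_const v
  simpa using (hF.hasFDerivAt.comp_hasDerivAt_of_eq 0 hray (zero_smul ℝ v).symm).clm_apply
    (hasDerivAt_const 0 v)

theorem fderiv_fderiv_apply_self_eq_of_comp_smul {F f : E → G} {c dc : ℝ → E} {v a : E}
    (hF : ∀ t ∈ Icc (0 : ℝ) 1, DifferentiableAt ℝ F (t • v))
    (hF₂ : DifferentiableAt ℝ (fderiv ℝ F) 0) (hf : ContDiff ℝ 2 f)
    (hc : ∀ t ∈ Icc (0 : ℝ) 1, HasDerivWithinAt c (dc t) (Icc 0 1) t) (hv : dc 0 = v)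
    (hdc : HasDerivWithinAt dc a (Icc 0 1) 0) (hFf : ∀ t ∈ Icc (0 : ℝ) 1, F (t • v) = f (c t)) :
    fderiv ℝ (fderiv ℝ F) 0 v v = fderiv ℝ (fderiv ℝ f) (c 0) v v + fderiv ℝ f (c 0) a := by
  have hu : UniqueDiffOn ℝ (Icc (0 : ℝ) 1) := uniqueDiffOn_Icc zero_lt_one
  have h0 : (0 : ℝ) ∈ Icc (0 : ℝ) 1 := left_mem_Icc.2 zero_le_one
  have hfirst : EqOn (fun t : ℝ ↦ fderiv ℝ F (t • v) v) (fun t ↦ fderiv ℝ f (c t) (dc t))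
      (Icc 0 1) := by
    intro t ht
    have hray : HasDerivWithinAt (fun t : ℝ ↦ F (t • v)) (fderiv ℝ F (t • v) v) (Icc 0 1) t := by
      simpa [Function.comp_def] using (hF t ht).hasFDerivAt.comp_hasDerivWithinAt t
        ((hasDerivAt_id t).smul_const v).hasDerivWithinAt
    have hcurve : HasDerivWithinAt (fun t : ℝ ↦ F (t • v)) (fderiv ℝ f (c t) (dc t))
        (Icc 0 1) t :=
      ((hf.differentiable two_ne_zero _).hasFDerivAt.comp_hasDerivWithinAt t (hc t ht)).congr
        hFf (hFf t ht)
    exact (hu t ht).eq_deriv _ hray hcurve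
  have hray₂ : HasDerivWithinAt (fun t : ℝ ↦ fderiv ℝ F (t • v) v)
      (fderiv ℝ (fderiv ℝ F) 0 v v) (Icc 0 1) 0 :=
    (hasDerivAt_fderiv_smul_apply hF₂ v).hasDerivWithinAt
  have hcurve₂ : HasDerivWithinAt (fun t : ℝ ↦ fderiv ℝ f (c t) (dc t))
      (fderiv ℝ (fderiv ℝ f) (c 0) v v + fderiv ℝ f (c 0) a) (Icc 0 1) 0 := by
    rw [← hv]
    exact ((hf.fderiv_right (m := 1) le_rfl).differentiable one_ne_zero _).hasFDerivAt
      |>.comp_hasDerivWithinAt 0 (hc 0 h0) |>.clm_apply hdc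
  exact (hu 0 h0).eq_deriv _ hray₂ (hcurve₂.congr hfirst (hfirst h0))

theorem ContinuousLinearMap.eq_of_eventually_apply_self {B Q : E →L[ℝ] E →L[ℝ] G}
    (hB : ∀ u w, B u w = B w u) (hQ : ∀ u w, Q u w = Q w u)
    (h : ∀ᶠ v in 𝓝 0, B v v = Q v v) : B = Q := by
  have hdiag (v : E) : B v v = Q v v := by
    have hray : Tendsto (fun c : ℝ ↦ c • v) (𝓝[≠] 0) (𝓝 0) :=
      ((continuous_id.smul continuous_const).tendsto' 0 0 (zero_smul ℝ v)).mono_left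
        nhdsWithin_le_nhds
    obtain ⟨c, hcv, hc⟩ := ((hray.eventually h).and self_mem_nhdsWithin).exists
    simp only [map_smul, smul_apply, smul_smul] at hcv
    exact smul_right_injective G (mul_ne_zero hc hc) hcv
  ext u w
  have hsum := hdiag (u + w)
  simp only [map_add, add_apply, hdiag u, hdiag w, hB w u, hQ w u] at hsum
  refine smul_right_injective G (two_ne_zero (α := ℝ)) ?_
  simp only [two_smul]
  linear_combination (norm := abel) hsum

/-- The exponential map of a symmetric connection transforms the second covariant
differential into the ordinary second differential: for the geodesic family `γ(v,s)` with
`γ(v,0) = x₀`, `∂ₛγ(v,0) = v`, `∂ₛ²γ = −Γ(γ)(∂ₛγ,∂ₛγ)`, and `exp(v) := γ(v,1)`, one has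
`D²(f∘exp)(0)(u,w) = D²f(x₀)(u,w) − Df(x₀)(Γ(x₀)(u,w))`. -/
theorem statement13 (n : ℕ)
    (Γ : EuclideanSpace ℝ (Fin n) →
      (EuclideanSpace ℝ (Fin n) →L[ℝ] EuclideanSpace ℝ (Fin n) →L[ℝ] EuclideanSpace ℝ (Fin n)))
    (hΓ : ContDiff ℝ (⊤ : ℕ∞) Γ)
    (hΓsymm : ∀ x u w, Γ x u w = Γ x w u)
    (x₀ : EuclideanSpace ℝ (Fin n))
    (V : Set (EuclideanSpace ℝ (Fin n))) (hV : IsOpen V) (h0V : (0 : EuclideanSpace ℝ (Fin n)) ∈ V)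
    (γ dγ : EuclideanSpace ℝ (Fin n) → ℝ → EuclideanSpace ℝ (Fin n))
    (hsmooth : ContDiffOn ℝ (⊤ : ℕ∞) (fun q : EuclideanSpace ℝ (Fin n) × ℝ => γ q.1 q.2)
      (V ×ˢ Set.Icc (0 : ℝ) 1))
    (hinit : ∀ v ∈ V, γ v 0 = x₀)
    (hvel : ∀ v ∈ V, dγ v 0 = v)
    (hderiv : ∀ v ∈ V, ∀ s ∈ Set.Icc (0 : ℝ) 1,
      HasDerivWithinAt (γ v) (dγ v s) (Set.Icc (0 : ℝ) 1) s)
    (hgeo : ∀ v ∈ V, ∀ s ∈ Set.Icc (0 : ℝ) 1,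
      HasDerivWithinAt (dγ v) (-(Γ (γ v s) (dγ v s) (dγ v s))) (Set.Icc (0 : ℝ) 1) s) :
    ∀ f : EuclideanSpace ℝ (Fin n) → ℝ, ContDiff ℝ (⊤ : ℕ∞) f →
      ∀ u w : EuclideanSpace ℝ (Fin n),
        iteratedFDeriv ℝ 2 (fun v => f (γ v 1)) 0 ![u, w]
          = iteratedFDeriv ℝ 2 f x₀ ![u, w] - fderiv ℝ f x₀ (Γ x₀ u w) := by
  intro f hf u w
  set F := fun v ↦ f (γ v 1)
  have hf₂ : ContDiff ℝ 2 f := hf.of_le (WithTop.coe_le_coe.mpr le_top)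
  have hF : ContDiffOn ℝ 2 F V :=
    hf₂.comp_contDiffOn <| (hsmooth.of_le (WithTop.coe_le_coe.mpr le_top)).comp
      (contDiffOn_id.prodMk contDiffOn_const) fun v hv ↦ ⟨hv, right_mem_Icc.2 zero_le_one⟩
  have hF₀ : ContDiffAt ℝ 2 F 0 := hF.contDiffAt (hV.mem_nhds h0V)
  have hcurve (v) (hv : v ∈ V) :
      IsIntegralCurveOn (fun s ↦ (γ v s, dγ v s)) (fun _ ↦ geodesicField Γ) (Icc 0 1) :=
    fun s hs ↦ (hderiv v hv s hs).prodMk (hgeo v hv s hs)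
  obtain ⟨r, hr, hrV⟩ := Metric.isOpen_iff.1 hV 0 h0V
  have hdiag : ∀ᶠ v in 𝓝 0, fderiv ℝ (fderiv ℝ F) 0 v v =
      (fderiv ℝ (fderiv ℝ f) x₀ - (ContinuousLinearMap.compL ℝ _ _ ℝ (fderiv ℝ f x₀)).comp
        (Γ x₀)) v v := by
    filter_upwards [Metric.ball_mem_nhds 0 hr] with v hv
    have htv (t : ℝ) (ht : t ∈ Icc (0 : ℝ) 1) : t • v ∈ V :=
      hrV <| (convex_ball 0 r).starConvex (Metric.mem_ball_self hr) |>.smul_mem hv ht.1 ht.2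
    have hv₀ := hrV hv
    have := fderiv_fderiv_apply_self_eq_of_comp_smul
      (fun t ht ↦ (hF.contDiffAt (hV.mem_nhds (htv t ht))).differentiableAt two_ne_zero)
      ((hF₀.fderiv_right (m := 1) le_rfl).differentiableAt one_ne_zero) hf₂ (hderiv v hv₀)
      (hvel v hv₀) (hgeo v hv₀ 0 (left_mem_Icc.2 zero_le_one)) fun t ht ↦
        congrArg f <| geodesicField_family_apply_smul (hΓ.of_le (WithTop.coe_le_coe.mpr le_top))
          hinit hvel hcurve hv₀ ht (htv t ht)
    rw [hvel v hv₀, hinit v hv₀] at this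
    simp [this, sub_eq_add_neg]
  have hFsymm : IsSymmSndFDerivAt ℝ F 0 := hF₀.isSymmSndFDerivAt (by simp)
  have hfsymm : IsSymmSndFDerivAt ℝ f x₀ := hf₂.contDiffAt.isSymmSndFDerivAt (by simp)
  have key := ContinuousLinearMap.eq_of_eventually_apply_self hFsymm
    (fun u w ↦ by simp [hfsymm u w, hΓsymm x₀ u w]) hdiag
  simp [iteratedFDeriv_two_apply, key]
end

section
/- Let Γ be a smooth map from ℝⁿ to the space of symmetric bilinear maps ℝⁿ × ℝⁿ → ℝⁿ, let x₀ ∈ ℝⁿ, let V be an open neighborhood of 0 in ℝⁿ, and let γ : V × [0,1] → ℝⁿ be smooth such that for each v ∈ V: γ(v,0) = x₀, ∂ₛγ(v,0) = v, and ∂ₛ²γ(v,s) = −Γ(γ(v,s))(∂ₛγ(v,s), ∂ₛγ(v,s)) for all s ∈ [0,1]. Define exp : V → ℝⁿ by exp(v) := γ(v,1). Then for every continuous linear functional ℓ : ℝⁿ → ℝ and every v ∈ ℝⁿ, the third Fréchet derivative of ℓ ∘ exp at 0 satisfies D³(ℓ∘exp)(0)(v,v,v) = ℓ( −(DΓ(x₀)(v))(v,v)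 + 2·Γ(x₀)(Γ(x₀)(v,v), v) ), where DΓ(x)(w) denotes the Fréchet derivative of x ↦ Γ(x) at x in the direction w. -/
/-!
Along a ray the exponential map is a reparametrised geodesic: if `ε • v ∈ V`, uniqueness of
solutions of the first-order system `(c, c') ↦ (c', -Γ c (c', c'))` gives
`exp (t • v) = γ (ε • v) (t / ε)` for `0 ≤ t ≤ ε`, and the right-hand side is the geodesic through
`x₀` with velocity `v`. Since `t ↦ exp (t • v)` is smooth near `0`, its third derivative at `0`
can be computed on `[0, ε]`, where it is the derivative of `c'' = -Γ c (c', c')`, namely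
`-DΓ(c)(c')(c', c') + 2 Γ c (Γ c (c', c'), c')` by the symmetry of `Γ`.
-/

open Set Topology

variable {E : Type*} [NormedAddCommGroup E] [NormedSpace ℝ E]

section IteratedDeriv

variable {F : Type*} [NormedAddCommGroup F] [NormedSpace ℝ F]

theorem iteratedFDeriv_apply_const_eq_iteratedDeriv_smul {f : E → F} {k : ℕ}
    (hf : ContDiffAt ℝ k f 0) (v : E) :
    iteratedFDeriv ℝ k f 0 (fun _ => v) = iteratedDeriv k (fun t : ℝ => f (t • v)) 0 := by
  obtain ⟨U, hU, hfU⟩ := hf.contDiffOn le_rfl (by simp)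
  obtain ⟨U', hU'U, hU', h0⟩ := mem_nhds_iff.1 hU
  set g := ContinuousLinearMap.toSpanSingleton ℝ v
  have hg0 : g 0 ∈ U' := by simpa [g] using h0
  have hfg : (fun t : ℝ => f (t • v)) = f ∘ g := rfl
  rw [iteratedDeriv_eq_iteratedFDeriv, hfg,
    ← iteratedFDerivWithin_of_isOpen k (hU'.preimage g.continuous) hg0,
    g.iteratedFDerivWithin_comp_right (hfU.mono hU'U) hU'.uniqueDiffOn
      (hU'.preimage g.continuous).uniqueDiffOn hg0 le_rfl,
    map_zero, iteratedFDerivWithin_of_isOpen k hU' h0]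
  simp [g]

theorem iteratedDerivWithin_succ_eq_of_hasDerivWithinAt {f g : ℝ → F} {g' : F} {s : Set ℝ}
    {x : ℝ} {k : ℕ} (hs : UniqueDiffOn ℝ s) (hx : x ∈ s)
    (hfg : EqOn (iteratedDerivWithin k f s) g s) (hg : HasDerivWithinAt g g' s x) :
    iteratedDerivWithin (k + 1) f s x = g' := by
  rw [iteratedDerivWithin_succ, derivWithin_congr hfg (hfg hx)]
  exact hg.derivWithin (hs x hx)

end IteratedDeriv

def IsGeodesicOn (Γ : E → E →L[ℝ] E →L[ℝ] E) (c dc : ℝ → E) (s : Set ℝ) : Prop :=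
  ∀ t ∈ s, HasDerivWithinAt c (dc t) s t ∧ HasDerivWithinAt dc (-Γ (c t) (dc t) (dc t)) s t

namespace IsGeodesicOn

variable {Γ : E → E →L[ℝ] E →L[ℝ] E} {c dc : ℝ → E} {s : Set ℝ}

theorem comp_mul (hc : IsGeodesicOn Γ c dc s) (a : ℝ) {s' : Set ℝ}
    (hs' : MapsTo (a * ·) s' s) :
    IsGeodesicOn Γ (fun r => c (a * r)) (fun r => a • dc (a * r)) s' := by
  intro t ht
  have hmul : HasDerivWithinAt (a * ·) a s' t := by
    simpa using (hasDerivWithinAt_id t s').const_mul a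
  refine ⟨(hc _ (hs' ht)).1.scomp t hmul hs', ?_⟩
  convert ((hc _ (hs' ht)).2.scomp t hmul hs').const_smul a using 1
  · ext r; rfl
  · simp [smul_neg]

theorem hasDerivWithinAt_acceleration (hc : IsGeodesicOn Γ c dc s)
    (hΓsymm : ∀ x u w, Γ x u w = Γ x w u) {t : ℝ} (ht : t ∈ s)
    (hΓt : DifferentiableAt ℝ Γ (c t)) :
    HasDerivWithinAt (fun r => -Γ (c r) (dc r) (dc r))
      (-(fderiv ℝ Γ (c t) (dc t)) (dc t) (dc t) + (2 : ℝ) • Γ (c t) (Γ (c t) (dc t) (dc t)) (dc t))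
      s t := by
  obtain ⟨hc', hdc'⟩ := hc t ht
  have hΓc : HasDerivWithinAt (fun r => Γ (c r)) (fderiv ℝ Γ (c t) (dc t)) s t :=
    HasFDerivAt.comp_hasDerivWithinAt (l := Γ) t hΓt.hasFDerivAt hc'
  convert ((hΓc.clm_apply hdc').clm_apply hdc').neg using 1
  · rfl
  · simp only [map_neg, add_apply, neg_apply, hΓsymm (c t) (dc t) (Γ (c t) (dc t) (dc t))]
    module

theorem iteratedDerivWithin_three (hc : IsGeodesicOn Γ c dc s) (hs : UniqueDiffOn ℝ s)
    (hΓ : Differentiable ℝ Γ) (hΓsymm : ∀ x u w, Γ x u w = Γ x w u) {t : ℝ} (ht : t ∈ s) :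
    iteratedDerivWithin 3 c s t =
      -(fderiv ℝ Γ (c t) (dc t)) (dc t) (dc t) +
        (2 : ℝ) • Γ (c t) (Γ (c t) (dc t) (dc t)) (dc t) := by
  have h1 : EqOn (iteratedDerivWithin 1 c s) dc s := fun r hr =>
    iteratedDerivWithin_succ_eq_of_hasDerivWithinAt hs hr
      (fun _ _ => by rw [iteratedDerivWithin_zero]) (hc r hr).1
  have h2 : EqOn (iteratedDerivWithin 2 c s) (fun r => -Γ (c r) (dc r) (dc r)) s := fun r hr =>
    iteratedDerivWithin_succ_eq_of_hasDerivWithinAt hs hr h1 (hc r hr).2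
  exact iteratedDerivWithin_succ_eq_of_hasDerivWithinAt hs ht h2
    (hc.hasDerivWithinAt_acceleration hΓsymm ht (hΓ _))

theorem eqOn_of_eq_of_eq (hΓ : ContDiff ℝ 1 Γ) {c' dc' : ℝ → E} {a b : ℝ}
    (hc : IsGeodesicOn Γ c dc (Icc a b)) (hc' : IsGeodesicOn Γ c' dc' (Icc a b))
    (hpos : c a = c' a) (hvel : dc a = dc' a) : EqOn c c' (Icc a b) := by
  let Φ : E × E → E × E := fun p => (p.2, -Γ p.1 p.2 p.2)
  have hΦ : ContDiff ℝ 1 Φ :=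
    contDiff_snd.prodMk (((hΓ.comp contDiff_fst).clm_apply contDiff_snd).clm_apply contDiff_snd).neg
  have solves {c dc : ℝ → E} (hc : IsGeodesicOn Γ c dc (Icc a b)) :
      ∀ r ∈ Icc a b, HasDerivWithinAt (fun r => (c r, dc r)) (Φ (c r, dc r)) (Icc a b) r :=
    fun r hr => (hc r hr).1.prodMk (hc r hr).2
  have hp := solves hc
  have hq := solves hc'
  have hpc : ContinuousOn (fun r => (c r, dc r)) (Icc a b) := fun r hr =>
    (hp r hr).continuousWithinAt
  have hqc : ContinuousOn (fun r => (c' r, dc' r)) (Icc a b) := fun r hr =>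
    (hq r hr).continuousWithinAt
  set K := (fun r => (c r, dc r)) '' Icc a b ∪ (fun r => (c' r, dc' r)) '' Icc a b
  obtain ⟨L, hL⟩ := hΦ.locallyLipschitz.locallyLipschitzOn.exists_lipschitzOnWith_of_compact
    ((isCompact_Icc.image_of_continuousOn hpc).union (isCompact_Icc.image_of_continuousOn hqc) :
      IsCompact K)
  intro r hr
  refine congrArg Prod.fst (ODE_solution_unique_of_mem_Icc_right (v := fun _ => Φ) (s := fun _ => K)
    (fun _ _ => hL) hpc (fun r hr => ?_) (fun r hr => ?_) hqc (fun r hr => ?_) (fun r hr => ?_)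
    (Prod.ext hpos hvel) hr)
  · exact (hp r (Ico_subset_Icc_self hr)).mono_of_mem_nhdsWithin (Icc_mem_nhdsGE_of_mem hr)
  · exact Or.inl (mem_image_of_mem _ (Ico_subset_Icc_self hr))
  · exact (hq r (Ico_subset_Icc_self hr)).mono_of_mem_nhdsWithin (Icc_mem_nhdsGE_of_mem hr)
  · exact Or.inr (mem_image_of_mem _ (Ico_subset_Icc_self hr))

end IsGeodesicOn

def IsGeodesicFamily (Γ : E → E →L[ℝ] E →L[ℝ] E) (x₀ : E) (V : Set E) (γ dγ : E → ℝ → E) :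
    Prop :=
  ∀ v ∈ V, IsGeodesicOn Γ (γ v) (dγ v) (Icc 0 1) ∧ γ v 0 = x₀ ∧ dγ v 0 = v

namespace IsGeodesicFamily

variable {Γ : E → E →L[ℝ] E →L[ℝ] E} {x₀ : E} {V : Set E} {γ dγ : E → ℝ → E}

theorem apply_smul_one (hfam : IsGeodesicFamily Γ x₀ V γ dγ) (hΓ : ContDiff ℝ 1 Γ) {w : E}
    (hw : w ∈ V) {a : ℝ} (ha : a ∈ Icc 0 1) (haw : a • w ∈ V) : γ (a • w) 1 = γ w a := by
  obtain ⟨hgeo_w, hinit_w, hvel_w⟩ := hfam w hw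
  obtain ⟨hgeo_aw, hinit_aw, hvel_aw⟩ := hfam _ haw
  have hscaled := hgeo_w.comp_mul a
    (fun s (hs : s ∈ Icc 0 1) => ⟨mul_nonneg ha.1 hs.1, mul_le_one₀ ha.2 hs.1 hs.2⟩)
  simpa using hgeo_aw.eqOn_of_eq_of_eq hΓ hscaled (by simp [hinit_w, hinit_aw])
    (by simp [hvel_w, hvel_aw]) ⟨zero_le_one, le_rfl⟩

theorem iteratedFDeriv_three_apply_one (hfam : IsGeodesicFamily Γ x₀ V γ dγ)
    (hΓ : ContDiff ℝ 1 Γ) (hΓsymm : ∀ x u w, Γ x u w = Γ x w u) (hV : V ∈ 𝓝 0)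
    (hexp : ContDiffAt ℝ 3 (fun u => γ u 1) 0) (v : E) :
    iteratedFDeriv ℝ 3 (fun u => γ u 1) 0 (fun _ => v) =
      -(fderiv ℝ Γ x₀ v) v v + (2 : ℝ) • Γ x₀ (Γ x₀ v v) v := by
  have hline : ContDiffAt ℝ 3 (fun t : ℝ => γ (t • v) 1) 0 :=
    (by rwa [zero_smul] : ContDiffAt ℝ 3 (fun u => γ u 1) ((0 : ℝ) • v)).comp (x := (0 : ℝ))
      (contDiffAt_id.smul contDiffAt_const)
  obtain ⟨ε, hε, hεV⟩ := mem_nhdsGE_iff_exists_Icc_subset.1 (mem_nhdsWithin_of_mem_nhds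
    ((continuous_id.smul continuous_const).continuousAt.preimage_mem_nhds
      (by simpa using hV) : (· • v) ⁻¹' V ∈ 𝓝 (0 : ℝ)))
  have h0ε : (0 : ℝ) ∈ Icc 0 ε := ⟨le_rfl, hε.le⟩
  have hεv : ε • v ∈ V := hεV ⟨hε.le, le_rfl⟩
  have hmaps : MapsTo (ε⁻¹ * ·) (Icc 0 ε) (Icc 0 1) := fun t ht =>
    ⟨mul_nonneg (inv_nonneg.2 hε.le) ht.1, inv_mul_le_one_of_le₀ ht.2 hε.le⟩
  have hc : IsGeodesicOn Γ (fun t => γ (ε • v) (ε⁻¹ * t))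
      (fun t => ε⁻¹ • dγ (ε • v) (ε⁻¹ * t)) (Icc 0 ε) :=
    (hfam _ hεv).1.comp_mul ε⁻¹ hmaps
  have hexp_eq : EqOn (fun t : ℝ => γ (t • v) 1) (fun t => γ (ε • v) (ε⁻¹ * t)) (Icc 0 ε) := by
    intro t ht
    have hcancel : (ε⁻¹ * t) • ε • v = t • v := by
      rw [smul_smul, mul_right_comm, inv_mul_cancel₀ hε.ne', one_mul]
    simpa only [hcancel] using hfam.apply_smul_one hΓ hεv (hmaps ht) (hcancel ▸ hεV ht)
  rw [iteratedFDeriv_apply_const_eq_iteratedDeriv_smul hexp,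
    ← iteratedDerivWithin_eq_iteratedDeriv (uniqueDiffOn_Icc hε) hline h0ε,
    iteratedDerivWithin_congr hexp_eq h0ε,
    hc.iteratedDerivWithin_three (uniqueDiffOn_Icc hε) (hΓ.differentiable one_ne_zero) hΓsymm h0ε]
  simp [(hfam _ hεv).2.1, (hfam _ hεv).2.2, hε.ne']

end IsGeodesicFamily

/-- Third differential of a linear functional composed with the exponential map: for the
geodesic family `γ(v,s)` with `γ(v,0) = x₀`, `∂ₛγ(v,0) = v`, `∂ₛ²γ = −Γ(γ)(∂ₛγ,∂ₛγ)`, and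
`exp(v) := γ(v,1)`, one has
`D³(ℓ∘exp)(0)(v,v,v) = ℓ(−DΓ(x₀)(v)(v,v) + 2·Γ(x₀)(Γ(x₀)(v,v),v))`. -/
theorem statement14 (n : ℕ)
    (Γ : EuclideanSpace ℝ (Fin n) →
      (EuclideanSpace ℝ (Fin n) →L[ℝ] EuclideanSpace ℝ (Fin n) →L[ℝ] EuclideanSpace ℝ (Fin n)))
    (hΓ : ContDiff ℝ (⊤ : ℕ∞) Γ)
    (hΓsymm : ∀ x u w, Γ x u w = Γ x w u)
    (x₀ : EuclideanSpace ℝ (Fin n))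
    (V : Set (EuclideanSpace ℝ (Fin n))) (hV : IsOpen V) (h0V : (0 : EuclideanSpace ℝ (Fin n)) ∈ V)
    (γ dγ : EuclideanSpace ℝ (Fin n) → ℝ → EuclideanSpace ℝ (Fin n))
    (hsmooth : ContDiffOn ℝ (⊤ : ℕ∞) (fun q : EuclideanSpace ℝ (Fin n) × ℝ => γ q.1 q.2)
      (V ×ˢ Set.Icc (0 : ℝ) 1))
    (hinit : ∀ v ∈ V, γ v 0 = x₀)
    (hvel : ∀ v ∈ V, dγ v 0 = v)
    (hderiv : ∀ v ∈ V, ∀ s ∈ Set.Icc (0 : ℝ) 1,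
      HasDerivWithinAt (γ v) (dγ v s) (Set.Icc (0 : ℝ) 1) s)
    (hgeo : ∀ v ∈ V, ∀ s ∈ Set.Icc (0 : ℝ) 1,
      HasDerivWithinAt (dγ v) (-(Γ (γ v s) (dγ v s) (dγ v s))) (Set.Icc (0 : ℝ) 1) s) :
    ∀ ℓ : EuclideanSpace ℝ (Fin n) →L[ℝ] ℝ, ∀ v : EuclideanSpace ℝ (Fin n),
      iteratedFDeriv ℝ 3 (fun u => ℓ (γ u 1)) 0 ![v, v, v]
        = ℓ (-((fderiv ℝ Γ x₀ v) v v) + (2 : ℝ) • Γ x₀ (Γ x₀ v v) v) := by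
  intro ℓ v
  have hfam : IsGeodesicFamily Γ x₀ V γ dγ := fun w hw =>
    ⟨fun s hs => ⟨hderiv w hw s hs, hgeo w hw s hs⟩, hinit w hw, hvel w hw⟩
  have hexp : ContDiffAt ℝ 3 (fun u => γ u 1) 0 :=
    ((hsmooth.comp (contDiff_id.prodMk contDiff_const).contDiffOn
      (fun u hu => ⟨hu, by norm_num⟩)).contDiffAt (hV.mem_nhds h0V)).of_le (by norm_cast)
  have hdiag : ![v, v, v] = fun _ => v := funext fun i => by fin_cases i <;> rfl
  rw [show (fun u => ℓ (γ u 1)) = ℓ ∘ fun u => γ u 1 from rfl,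
    ℓ.iteratedFDeriv_comp_left hexp le_rfl, ContinuousLinearMap.compContinuousMultilinearMap_coe,
    Function.comp_apply, hdiag, hfam.iteratedFDeriv_three_apply_one (hΓ.of_le (by norm_cast))
      hΓsymm (hV.mem_nhds h0V) hexp v]
end

section
/- Let Γ be a smooth map from ℝⁿ to the space of symmetric bilinear maps ℝⁿ × ℝⁿ → ℝⁿ, let x₀ ∈ ℝⁿ, let V be an open neighborhood of 0 in ℝⁿ, and let γ : V × [0,1] → ℝⁿ be smooth such that for each v ∈ V: γ(v,0) = x₀, ∂ₛγ(v,0) = v, and ∂ₛ²γ(v,s) = −Γ(γ(v,s))(∂ₛγ(v,s), ∂ₛγ(v,s)) for all s ∈ [0,1]. For s ∈ [0,1] define exp_s : V → ℝⁿ by exp_s(v) := γ(v,s), and write exp := exp_1. Then for every smooth f : ℝⁿ → ℝ, every r ∈ ℕ, every s ∈ [0,1] and every v ∈ ℝⁿ, the iterated Fréchet derivatives at 0 satisfy D^r(f∘exp_s)(0)(v,…,v) = s^r · D^r(f∘exp)(0)(v,…,v). (Hence the quantization rule defined by exp_s coincides with the one defined by exp after replacing the constant ħ by s·ħ.) -/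
open Set Metric

private lemma iter_congr_aux {E : Type*} [NormedAddCommGroup E] [NormedSpace ℝ E]
    {f₁ f₂ : E → ℝ} {x : E} (h : f₁ =ᶠ[nhds x] f₂) (r : ℕ) :
    iteratedFDeriv ℝ r f₁ x = iteratedFDeriv ℝ r f₂ x := by
  rw [← iteratedFDerivWithin_univ, ← iteratedFDerivWithin_univ]
  exact Filter.EventuallyEq.iteratedFDerivWithin_eq (by rwa [nhdsWithin_univ]) h.eq_of_nhds r

/-- For the geodesic family `γ(v,s)` with `γ(v,0) = x₀`, `∂ₛγ(v,0) = v`,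
`∂ₛ²γ = −Γ(γ)(∂ₛγ,∂ₛγ)`, and the exponential maps `exp_s(v) := γ(v,s)`, `exp := exp_1`,
one has `D^r(f∘exp_s)(0)(v,…,v) = s^r · D^r(f∘exp)(0)(v,…,v)`: the flow produces a
one-parameter family of quantizations in which `ħ` is replaced by `s·ħ`. -/
theorem statement15 (n : ℕ)
    (Γ : EuclideanSpace ℝ (Fin n) →
      (EuclideanSpace ℝ (Fin n) →L[ℝ] EuclideanSpace ℝ (Fin n) →L[ℝ] EuclideanSpace ℝ (Fin n)))
    (hΓ : ContDiff ℝ (⊤ : ℕ∞) Γ)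
    (hΓsymm : ∀ x u w, Γ x u w = Γ x w u)
    (x₀ : EuclideanSpace ℝ (Fin n))
    (V : Set (EuclideanSpace ℝ (Fin n))) (hV : IsOpen V) (h0V : (0 : EuclideanSpace ℝ (Fin n)) ∈ V)
    (γ dγ : EuclideanSpace ℝ (Fin n) → ℝ → EuclideanSpace ℝ (Fin n))
    (hsmooth : ContDiffOn ℝ (⊤ : ℕ∞) (fun q : EuclideanSpace ℝ (Fin n) × ℝ => γ q.1 q.2)
      (V ×ˢ Set.Icc (0 : ℝ) 1))
    (hinit : ∀ v ∈ V, γ v 0 = x₀)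
    (hvel : ∀ v ∈ V, dγ v 0 = v)
    (hderiv : ∀ v ∈ V, ∀ s ∈ Set.Icc (0 : ℝ) 1,
      HasDerivWithinAt (γ v) (dγ v s) (Set.Icc (0 : ℝ) 1) s)
    (hgeo : ∀ v ∈ V, ∀ s ∈ Set.Icc (0 : ℝ) 1,
      HasDerivWithinAt (dγ v) (-(Γ (γ v s) (dγ v s) (dγ v s))) (Set.Icc (0 : ℝ) 1) s) :
    ∀ f : EuclideanSpace ℝ (Fin n) → ℝ, ContDiff ℝ (⊤ : ℕ∞) f →
      ∀ r : ℕ, ∀ s ∈ Set.Icc (0 : ℝ) 1, ∀ v : EuclideanSpace ℝ (Fin n),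
        iteratedFDeriv ℝ r (fun w => f (γ w s)) 0 (fun _ => v)
          = s ^ r * iteratedFDeriv ℝ r (fun w => f (γ w 1)) 0 (fun _ => v) := by
  intro f hf r s hs v
  obtain ⟨hs0, hs1⟩ := hs
  obtain ⟨ε, hε, hball⟩ := Metric.isOpen_iff.1 hV 0 h0V
  -- Step A : γ w s = γ (s • w) 1 for w in the ball
  have key : ∀ w ∈ Metric.ball (0 : EuclideanSpace ℝ (Fin n)) ε, γ w s = γ (s • w) 1 := by
    intro w hw
    have hwV : w ∈ V := hball hw
    have hnorm : ∀ u : EuclideanSpace ℝ (Fin n), ‖s • u‖ ≤ ‖u‖ := by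
      intro u
      rw [norm_smul, Real.norm_eq_abs, abs_of_nonneg hs0]
      nlinarith [norm_nonneg u]
    have hsw : s • w ∈ Metric.ball (0 : EuclideanSpace ℝ (Fin n)) ε := by
      rw [Metric.mem_ball, dist_zero_right] at hw ⊢
      exact lt_of_le_of_lt (hnorm w) hw
    have hswV : s • w ∈ V := hball hsw
    set F : (EuclideanSpace ℝ (Fin n)) × (EuclideanSpace ℝ (Fin n)) →
        (EuclideanSpace ℝ (Fin n)) × (EuclideanSpace ℝ (Fin n)) :=
      fun q => (q.2, -(Γ q.1 q.2 q.2)) with hFdef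
    have hF : ContDiff ℝ (⊤ : ℕ∞) F :=
      contDiff_snd.prodMk
        (((hΓ.comp contDiff_fst).clm_apply contDiff_snd).clm_apply contDiff_snd).neg
    set c₁ : ℝ → (EuclideanSpace ℝ (Fin n)) × (EuclideanSpace ℝ (Fin n)) :=
      fun t => (γ w (s * t), s • dγ w (s * t)) with hc1def
    set c₂ : ℝ → (EuclideanSpace ℝ (Fin n)) × (EuclideanSpace ℝ (Fin n)) :=
      fun t => (γ (s • w) t, dγ (s • w) t) with hc2def
    have hmul : ∀ t ∈ Set.Icc (0:ℝ) 1, s * t ∈ Set.Icc (0:ℝ) 1 := by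
      intro t ht
      constructor
      · exact mul_nonneg hs0 ht.1
      · nlinarith [ht.1, ht.2]
    have hd1 : ∀ t ∈ Set.Icc (0:ℝ) 1, HasDerivWithinAt c₁ (F (c₁ t)) (Set.Icc 0 1) t := by
      intro t ht
      have hin : HasDerivWithinAt (fun t : ℝ => s * t) s (Set.Icc 0 1) t := by
        simpa using ((hasDerivAt_id t).const_mul s).hasDerivWithinAt
      have h1 := (hderiv w hwV (s*t) (hmul t ht)).scomp t hin (fun u hu => hmul u hu)
      have h2 := ((hgeo w hwV (s*t) (hmul t ht)).scomp t hin (fun u hu => hmul u hu)).const_smul s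
      have h3 := h1.prodMk h2
      convert h3 using 1
      all_goals simp [hFdef, hc1def, smul_neg, smul_smul, Function.comp]
    have hd2 : ∀ t ∈ Set.Icc (0:ℝ) 1, HasDerivWithinAt c₂ (F (c₂ t)) (Set.Icc 0 1) t := by
      intro t ht
      exact (hderiv _ hswV t ht).prodMk (hgeo _ hswV t ht)
    have hcont1 : ContinuousOn c₁ (Set.Icc 0 1) := fun t ht => (hd1 t ht).continuousWithinAt
    have hcont2 : ContinuousOn c₂ (Set.Icc 0 1) := fun t ht => (hd2 t ht).continuousWithinAt
    obtain ⟨R₁, hR₁⟩ := isCompact_Icc.exists_bound_of_continuousOn hcont1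
    obtain ⟨R₂, hR₂⟩ := isCompact_Icc.exists_bound_of_continuousOn hcont2
    set R : ℝ := max R₁ R₂ with hRdef
    have hmem1 : ∀ t ∈ Set.Icc (0:ℝ) 1, c₁ t ∈ Metric.closedBall (0 : _) R := by
      intro t ht
      rw [Metric.mem_closedBall, dist_zero_right]
      exact (hR₁ t ht).trans (le_max_left _ _)
    have hmem2 : ∀ t ∈ Set.Icc (0:ℝ) 1, c₂ t ∈ Metric.closedBall (0 : _) R := by
      intro t ht
      rw [Metric.mem_closedBall, dist_zero_right]
      exact (hR₂ t ht).trans (le_max_right _ _)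
    have hfd : Continuous (fderiv ℝ F) := hF.continuous_fderiv (by simp)
    obtain ⟨C, hC⟩ := (isCompact_closedBall (0 : _) R).exists_bound_of_continuousOn
      hfd.continuousOn
    have hlip : LipschitzOnWith C.toNNReal F (Metric.closedBall 0 R) := by
      apply Convex.lipschitzOnWith_of_nnnorm_fderiv_le
        (fun x _ => (hF.differentiable (by simp)).differentiableAt) ?_ (convex_closedBall 0 R)
      intro x hx
      rw [← NNReal.coe_le_coe, coe_nnnorm, Real.coe_toNNReal']
      exact le_max_of_le_left (hC x hx)
    have ha : c₁ 0 = c₂ 0 := by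
      simp only [hc1def, hc2def, mul_zero]
      rw [hinit w hwV, hinit _ hswV, hvel w hwV, hvel _ hswV]
    have heq : Set.EqOn c₁ c₂ (Set.Icc 0 1) := by
      apply ODE_solution_unique_of_mem_Icc_right
        (v := fun _ => F) (s := fun _ => Metric.closedBall 0 R) (fun _ _ => hlip)
        hcont1 ?_ ?_ hcont2 ?_ ?_ ha
      · intro t ht
        exact (hd1 t (Set.Ico_subset_Icc_self ht)).mono_of_mem_nhdsWithin
          (Icc_mem_nhdsGE_of_mem ht)
      · intro t ht; exact hmem1 t (Set.Ico_subset_Icc_self ht)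
      · intro t ht
        exact (hd2 t (Set.Ico_subset_Icc_self ht)).mono_of_mem_nhdsWithin
          (Icc_mem_nhdsGE_of_mem ht)
      · intro t ht; exact hmem2 t (Set.Ico_subset_Icc_self ht)
    have h1 := heq (Set.right_mem_Icc.2 zero_le_one)
    have := congrArg Prod.fst h1
    simpa [hc1def, hc2def, mul_one] using this
  -- Step B
  have hnorm : ∀ u : EuclideanSpace ℝ (Fin n), ‖s • u‖ ≤ ‖u‖ := by
    intro u
    rw [norm_smul, Real.norm_eq_abs, abs_of_nonneg hs0]
    nlinarith [norm_nonneg u]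
  have hε2 : Metric.closedBall (0 : EuclideanSpace ℝ (Fin n)) (ε/2) ⊆ V := by
    intro x hx
    apply hball
    rw [Metric.mem_closedBall] at hx
    rw [Metric.mem_ball]
    linarith
  set φ : ContDiffBump (0 : EuclideanSpace ℝ (Fin n)) :=
    ⟨ε/4, ε/2, by positivity, by linarith⟩ with hφdef
  have hg : ContDiffOn ℝ (⊤ : ℕ∞) (fun w => f (γ w 1)) V := by
    have h1 : ContDiffOn ℝ (⊤ : ℕ∞) (fun w : EuclideanSpace ℝ (Fin n) => γ w 1) V :=
      hsmooth.comp ((contDiff_id.prodMk contDiff_const).contDiffOn)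
        (fun w hw => ⟨hw, zero_le_one, le_refl 1⟩)
    exact hf.comp_contDiffOn h1
  set h : EuclideanSpace ℝ (Fin n) → ℝ := fun w => φ w * f (γ w 1) with hhdef
  have hh : ContDiff ℝ (⊤ : ℕ∞) h := by
    rw [contDiff_iff_contDiffAt]
    intro x
    by_cases hx : x ∈ V
    · exact (φ.contDiff.contDiffAt).mul (hg.contDiffAt (hV.mem_nhds hx))
    · have hxs : x ∉ tsupport (φ : EuclideanSpace ℝ (Fin n) → ℝ) := by
        rw [φ.tsupport_eq]
        exact fun hmem => hx (hε2 hmem)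
      have hev : h =ᶠ[nhds x] fun _ => (0:ℝ) := by
        filter_upwards [(isClosed_tsupport _).isOpen_compl.mem_nhds hxs] with y hy
        simp [hhdef, image_eq_zero_of_notMem_tsupport hy]
      exact contDiffAt_const.congr_of_eventuallyEq hev
  have hone : ∀ y ∈ Metric.closedBall (0 : EuclideanSpace ℝ (Fin n)) (ε/4),
      h y = f (γ y 1) := by
    intro y hy
    have : φ y = 1 := φ.one_of_mem_closedBall hy
    simp [hhdef, this]
  set A : EuclideanSpace ℝ (Fin n) →L[ℝ] EuclideanSpace ℝ (Fin n) :=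
    s • ContinuousLinearMap.id ℝ _ with hAdef
  have hAapp : ∀ w, A w = s • w := fun w => rfl
  have e1 : (fun w => f (γ w s)) =ᶠ[nhds (0 : EuclideanSpace ℝ (Fin n))] (h ∘ A) := by
    filter_upwards [Metric.ball_mem_nhds 0 (by positivity : (0:ℝ) < ε/4)] with y hy
    have hyε : y ∈ Metric.ball (0 : EuclideanSpace ℝ (Fin n)) ε := by
      rw [Metric.mem_ball, dist_zero_right] at hy ⊢
      linarith
    have hsy : s • y ∈ Metric.closedBall (0 : EuclideanSpace ℝ (Fin n)) (ε/4) := by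
      rw [Metric.mem_closedBall, dist_zero_right]
      rw [Metric.mem_ball, dist_zero_right] at hy
      exact (hnorm y).trans hy.le
    show f (γ y s) = h (A y)
    rw [key y hyε, hAapp]
    exact (hone _ hsy).symm
  have e3 : (fun w => f (γ w 1)) =ᶠ[nhds (0 : EuclideanSpace ℝ (Fin n))] h := by
    filter_upwards [Metric.ball_mem_nhds 0 (by positivity : (0:ℝ) < ε/4)] with y hy
    exact (hone y (Metric.ball_subset_closedBall hy)).symm
  rw [iter_congr_aux e1 r, iter_congr_aux e3 r,
    A.iteratedFDeriv_comp_right hh 0 (by exact_mod_cast le_top)]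
  simp only [ContinuousMultilinearMap.compContinuousLinearMap_apply, map_zero]
  have hm := (iteratedFDeriv ℝ r h 0).map_smul_univ (fun _ : Fin r => s) (fun _ => v)
  have harg : (fun _ : Fin r => A v)
      = fun i : Fin r => (fun _ : Fin r => s) i • (fun _ : Fin r => v) i := rfl
  rw [harg, hm]
  simp [Finset.prod_const, smul_eq_mul]
end
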